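/- Let a₁, a₂, a₃, a₄, a₅ ≥ 0 be nonnegative reals (representing |M₂*|, |M₁*|, |M₂'*|, |M₁'*|, |M₂''*|) with total μ = a₁ + a₂ + a₃ + a₄ + a₅. Let c = 2 - √2. Suppose S₁ ≥ (a₁ + a₂/2 + a₃/2) + c(a₄ + a₅) and S₂ ≥ c(a₁ + a₂ + a₃). Then max(S₁, S₂) ≥ (4(5 - 2√2)/17)·μ. -/

import Mathlib

/-!
Average the two bounds with weight `β = (12 + 2√2)/17` on the first: `max S₁ S₂` dominates
`β S₁ + (1 - β) S₂`, in which `a₂, a₃` get coefficient `β/2 + c(1 - β)`, `a₄, a₅` get `cβ` and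
`a₁` gets more than both. The weight is chosen so that `β/2 + c(1 - β) = cβ = 4(5 - 2√2)/17`.
-/

open Real

lemma mul_sum_le_weighted_average {a₁ a₂ a₃ a₄ a₅ S₁ S₂ β c κ : ℝ}
    (h1 : 0 ≤ a₁) (h2 : 0 ≤ a₂) (h3 : 0 ≤ a₃) (h4 : 0 ≤ a₄) (h5 : 0 ≤ a₅)
    (hβ₀ : 0 ≤ β) (hβ₁ : β ≤ 1)
    (hκ_half : κ ≤ β / 2 + c * (1 - β)) (hκ_full : κ ≤ c * β)
    (hS₁ : (a₁ + a₂ / 2 + a₃ / 2) + c * (a₄ + a₅) ≤ S₁)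
    (hS₂ : c * (a₁ + a₂ + a₃) ≤ S₂) :
    κ * (a₁ + a₂ + a₃ + a₄ + a₅) ≤ β * S₁ + (1 - β) * S₂ := by
  have hκ_a₁ : κ ≤ β + c * (1 - β) := by linarith
  calc κ * (a₁ + a₂ + a₃ + a₄ + a₅)
      ≤ a₁ * (β + c * (1 - β)) + (a₂ + a₃) * (β / 2 + c * (1 - β)) + (a₄ + a₅) * (c * β) := by
        linarith [mul_le_mul_of_nonneg_left hκ_a₁ h1,
          mul_le_mul_of_nonneg_left hκ_half (add_nonneg h2 h3),
          mul_le_mul_of_nonneg_left hκ_full (add_nonneg h4 h5)]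
    _ = β * ((a₁ + a₂ / 2 + a₃ / 2) + c * (a₄ + a₅)) + (1 - β) * (c * (a₁ + a₂ + a₃)) := by ring
    _ ≤ β * S₁ + (1 - β) * S₂ := by gcongr

lemma two_sub_sqrt_two_mul_weight :
    (2 - √2) * ((12 + 2 * √2) / 17) = 4 * (5 - 2 * √2) / 17 := by
  linear_combination (-2 / 17 : ℝ) * sq_sqrt (zero_le_two : (0 : ℝ) ≤ 2)

lemma weight_div_two_add_two_sub_sqrt_two_mul :
    (12 + 2 * √2) / 17 / 2 + (2 - √2) * (1 - (12 + 2 * √2) / 17) = 4 * (5 - 2 * √2) / 17 := by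
  linear_combination (2 / 17 : ℝ) * sq_sqrt (zero_le_two : (0 : ℝ) ≤ 2)

/-- Algebraic core of the 0.5109-approximation: for nonnegative reals
`a₁,…,a₅` with total `μ`, `c = 2 - √2`, and reals `S₁ ≥ (a₁ + a₂/2 + a₃/2) +
c(a₄ + a₅)`, `S₂ ≥ c(a₁ + a₂ + a₃)`, we have `max S₁ S₂ ≥ (4(5-2√2)/17)·μ`. -/
theorem stmt8 (a₁ a₂ a₃ a₄ a₅ μ c S₁ S₂ : ℝ)
    (h1 : 0 ≤ a₁) (h2 : 0 ≤ a₂) (h3 : 0 ≤ a₃) (h4 : 0 ≤ a₄) (h5 : 0 ≤ a₅)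
    (hμ : μ = a₁ + a₂ + a₃ + a₄ + a₅)
    (hc : c = 2 - Real.sqrt 2)
    (hS₁ : S₁ ≥ (a₁ + a₂ / 2 + a₃ / 2) + c * (a₄ + a₅))
    (hS₂ : S₂ ≥ c * (a₁ + a₂ + a₃)) :
    max S₁ S₂ ≥ (4 * (5 - 2 * Real.sqrt 2) / 17) * μ := by
  subst hμ hc
  have hβ₀ : 0 ≤ (12 + 2 * √2) / 17 := by positivity
  have hβ₁ : (12 + 2 * √2) / 17 ≤ 1 := by
    nlinarith [sq_sqrt (zero_le_two : (0 : ℝ) ≤ 2), sqrt_nonneg 2]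
  calc 4 * (5 - 2 * √2) / 17 * (a₁ + a₂ + a₃ + a₄ + a₅)
      ≤ (12 + 2 * √2) / 17 * S₁ + (1 - (12 + 2 * √2) / 17) * S₂ :=
        mul_sum_le_weighted_average h1 h2 h3 h4 h5 hβ₀ hβ₁
          weight_div_two_add_two_sub_sqrt_two_mul.ge two_sub_sqrt_two_mul_weight.ge hS₁ hS₂
    _ ≤ max S₁ S₂ := Convex.combo_le_max S₁ S₂ hβ₀ (sub_nonneg.2 hβ₁) (add_sub_cancel _ _)
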